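/- arXiv:0712.3649 — 3 statements merged into one kernel-verified Lean document; each statement's English description precedes it below -/
import Mathlib

section
/- The generating series B(t) of nonempty Motzkin bridges (walks with steps in {-1,0,+1} and total increment 0), counted by length, satisfies B = t(1 + 2U)(1 + B), where U is the series of primitive Motzkin walks satisfying U = t(1 + U + U^2); consequently B = U(1 + 2U)/(1 - U^2) and 1 + B = (1 + U + U^2)/(1 - U^2) = 1/sqrt(1 - 2t - 3t^2). -/
/-!
Cutting a walk of negative increment at the first time it reaches `-1` splits it uniquely into a
primitive walk followed by an arbitrary walk. Together with a decomposition by the first step this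
gives `U = t (1 + U + U²)` (a primitive walk is a down-step, a flat step followed by a primitive
walk, or an up-step followed by two primitive walks) and, writing `Mᵢ` for the walks of
increment `i`, `M₀ = 1 + t (M₁ + M₀ + M₋₁)` with `M₋₁ = U M₀` (first passage) and `M₁ = M₋₁`
(reflection `w ↦ -w`). As `M₀ = 1 + B`, this is `B = t (1 + 2U)(1 + B)`. The remaining identities
are algebra, using `(1 - U²)² = (1 - 2t - 3t²)(1 + U + U²)²` and that `1 + U + U²` is invertible.
-/

open PowerSeries

/-- A Motzkin walk: a finite sequence of steps in `{-1, 0, +1}`. -/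
def IsMotzkin (w : List ℤ) : Prop := ∀ x ∈ w, x = -1 ∨ x = 0 ∨ x = 1

/-- The increment of a walk: the sum of its steps. -/
def increment (w : List ℤ) : ℤ := w.sum

/-- A Motzkin walk is primitive if its increment is `-1` while every proper prefix
has nonnegative increment. -/
def IsPrimitive (w : List ℤ) : Prop :=
  increment w = -1 ∧ ∀ k < w.length, 0 ≤ increment (w.take k)

/-- The generating series of nonempty primitive Motzkin walks, by length. -/
noncomputable def U : PowerSeries ℚ :=
  PowerSeries.mk fun n =>
    (Nat.card {w : List ℤ // IsMotzkin w ∧ IsPrimitive w ∧ w.length = n ∧ w ≠ []} : ℚ)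

/-- The generating series of nonempty Motzkin bridges (walks of increment `0`),
by length. -/
noncomputable def B : PowerSeries ℚ :=
  PowerSeries.mk fun n =>
    (Nat.card {w : List ℤ // IsMotzkin w ∧ increment w = 0 ∧ w.length = n ∧ w ≠ []} : ℚ)

/-- The generating series of Motzkin walks of increment `i`, by length. -/
noncomputable def M (i : ℤ) : PowerSeries ℚ :=
  PowerSeries.mk fun n =>
    (Nat.card {w : List ℤ // IsMotzkin w ∧ increment w = i ∧ w.length = n} : ℚ)

lemma isMotzkin_nil : IsMotzkin [] := List.forall_mem_nil _

lemma isMotzkin_cons {s : ℤ} {t : List ℤ} :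
    IsMotzkin (s :: t) ↔ (s = -1 ∨ s = 0 ∨ s = 1) ∧ IsMotzkin t :=
  List.forall_mem_cons

lemma isMotzkin_append {p q : List ℤ} : IsMotzkin (p ++ q) ↔ IsMotzkin p ∧ IsMotzkin q :=
  List.forall_mem_append

lemma isMotzkin_map_neg {w : List ℤ} : IsMotzkin (w.map Neg.neg) ↔ IsMotzkin w := by
  simp only [IsMotzkin, List.forall_mem_map]
  exact forall₂_congr fun x _ => by omega

@[simp] lemma increment_nil : increment [] = 0 := rfl

@[simp] lemma increment_cons (s : ℤ) (t : List ℤ) : increment (s :: t) = s + increment t :=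
  List.sum_cons

@[simp] lemma increment_append (p q : List ℤ) : increment (p ++ q) = increment p + increment q :=
  List.sum_append

lemma increment_map_neg (w : List ℤ) : increment (w.map Neg.neg) = -increment w :=
  (List.sum_neg w).symm

lemma IsMotzkin.increment_take_succ_ge {w : List ℤ} (hw : IsMotzkin w) (j : ℕ) :
    increment (w.take j) - 1 ≤ increment (w.take (j + 1)) := by
  rcases lt_or_ge j w.length with hj | hj
  · have hstep := hw _ (List.getElem_mem hj)
    rw [increment, increment, List.sum_take_succ w j hj]
    omega
  · rw [List.take_of_length_le hj, List.take_of_length_le (by omega)]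
    omega

lemma IsPrimitive.ne_nil {w : List ℤ} (hw : IsPrimitive w) : w ≠ [] := by
  rintro rfl
  simpa using hw.1

lemma IsPrimitive.neg_one_le_increment_take {p : List ℤ} (hp : IsPrimitive p) (k : ℕ) :
    -1 ≤ increment (p.take k) := by
  rcases lt_or_ge k p.length with hk | hk
  · linarith [hp.2 k hk]
  · rw [List.take_of_length_le hk, hp.1]

lemma isPrimitive_cons {s : ℤ} {t : List ℤ} :
    IsPrimitive (s :: t) ↔
      s + increment t = -1 ∧ ∀ k < t.length, 0 ≤ s + increment (t.take k) := by
  simp only [IsPrimitive, increment_cons, List.length_cons]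
  refine and_congr_right fun _ => ⟨fun h k hk => ?_, fun h k hk => ?_⟩
  · simpa using h (k + 1) (by omega)
  · cases k with
    | zero => simp
    | succ k => simpa using h k (by omega)

lemma isPrimitive_neg_one_cons {t : List ℤ} : IsPrimitive (-1 :: t) ↔ t = [] := by
  rw [isPrimitive_cons]
  constructor
  · rintro ⟨-, h⟩
    rw [← List.length_eq_zero_iff]
    by_contra hne
    simpa using h 0 (by omega)
  · rintro rfl
    simp

lemma isPrimitive_zero_cons {t : List ℤ} : IsPrimitive (0 :: t) ↔ IsPrimitive t := by
  simp only [isPrimitive_cons, zero_add]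
  rfl

lemma IsPrimitive.eq_of_prefix {p p' : List ℤ} (hp : IsPrimitive p) (hp' : IsPrimitive p')
    (h : p <+: p') : p = p' := by
  obtain ⟨r, rfl⟩ := h
  obtain rfl | hr := eq_or_ne r []
  · exact (List.append_nil p).symm
  · have hlt : p.length < (p ++ r).length := by
      simpa using List.length_pos_iff.mpr hr
    have := hp'.2 p.length hlt
    rw [List.take_left, hp.1] at this
    omega

lemma IsMotzkin.exists_isPrimitive_take {w : List ℤ} (hw : IsMotzkin w)
    (hneg : increment w < 0) : ∃ k, IsPrimitive (w.take k) := by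
  classical
  -- cut at the first time the walk reaches `-1`
  have hex : ∃ k, increment (w.take k) < 0 := ⟨w.length, by rwa [List.take_length]⟩
  refine ⟨Nat.find hex, ?_, fun j hj => ?_⟩
  · obtain ⟨k, hk⟩ : ∃ k, Nat.find hex = k + 1 :=
      Nat.exists_eq_add_one.mpr (Nat.pos_of_ne_zero fun h0 => by
        simpa [h0] using Nat.find_spec hex)
    have hbefore := Nat.find_min hex (show k < Nat.find hex by omega)
    have hat := Nat.find_spec hex
    rw [hk] at hat ⊢
    have := hw.increment_take_succ_ge k
    omega
  · have hj' : j < Nat.find hex := lt_of_lt_of_le hj (List.length_take_le _ _)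
    rw [List.take_take, min_eq_left hj'.le]
    exact not_lt.mp (Nat.find_min hex hj')

lemma IsMotzkin.exists_isPrimitive_append {w : List ℤ} (hw : IsMotzkin w)
    (hneg : increment w < 0) : ∃ p q, IsPrimitive p ∧ w = p ++ q := by
  obtain ⟨k, hk⟩ := hw.exists_isPrimitive_take hneg
  exact ⟨_, _, hk, (List.take_append_drop k w).symm⟩

lemma increment_eq_neg_one_iff {w : List ℤ} (hw : IsMotzkin w) :
    increment w = -1 ↔ ∃ p q, IsPrimitive p ∧ increment q = 0 ∧ w = p ++ q := by
  constructor
  · intro h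
    obtain ⟨p, q, hp, rfl⟩ := hw.exists_isPrimitive_append (by omega)
    refine ⟨p, q, hp, ?_, rfl⟩
    rw [increment_append, hp.1] at h
    omega
  · rintro ⟨p, q, hp, hq, rfl⟩
    rw [increment_append, hp.1, hq]
    rfl

/-- An up-step followed by two primitive walks: the first brings the walk back to level `0`,
the second down to `-1`. -/
lemma isPrimitive_one_cons {t : List ℤ} (ht : IsMotzkin t) :
    IsPrimitive (1 :: t) ↔ ∃ p q, IsPrimitive p ∧ IsPrimitive q ∧ t = p ++ q := by
  rw [isPrimitive_cons]
  constructor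
  · rintro ⟨htot, hpre⟩
    obtain ⟨p, q, hp, rfl⟩ := ht.exists_isPrimitive_append (by omega)
    refine ⟨p, q, hp, ⟨?_, fun j hj => ?_⟩, rfl⟩
    · rw [increment_append, hp.1] at htot
      omega
    · have := hpre (p.length + j) (by simp; omega)
      rw [List.take_append, List.take_of_length_le (by omega), Nat.add_sub_cancel_left,
        increment_append, hp.1] at this
      omega
  · rintro ⟨p, q, hp, hq, rfl⟩
    refine ⟨by rw [increment_append, hp.1, hq.1]; rfl, fun k hk => ?_⟩
    rw [List.take_append, increment_append]
    have hpk := hp.neg_one_le_increment_take k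
    rcases lt_or_ge k p.length with hkp | hkp
    · have := hp.2 k hkp
      rw [Nat.sub_eq_zero_of_le hkp.le, List.take_zero, increment_nil]
      omega
    · have := hq.2 (k - p.length) (by simp at hk; omega)
      omega

def motzkinWalks : ℕ → Finset (List ℤ)
  | 0 => {[]}
  | n + 1 => (({-1, 0, 1} : Finset ℤ) ×ˢ motzkinWalks n).image fun st => st.1 :: st.2

lemma mem_motzkinWalks {w : List ℤ} {n : ℕ} :
    w ∈ motzkinWalks n ↔ IsMotzkin w ∧ w.length = n := by
  induction n generalizing w with
  | zero => cases w <;> simp [motzkinWalks, isMotzkin_nil]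
  | succ n ih =>
    cases w with
    | nil => simp [motzkinWalks]
    | cons s t =>
      simp only [motzkinWalks, Finset.mem_image, Finset.mem_product, Finset.mem_insert,
        Finset.mem_singleton, ih, Prod.exists, List.cons.injEq, isMotzkin_cons, List.length_cons,
        Nat.add_right_cancel_iff]
      constructor
      · rintro ⟨s, t, ⟨hs, ht⟩, rfl, rfl⟩
        exact ⟨⟨hs, ht.1⟩, ht.2⟩
      · rintro ⟨⟨hs, ht⟩, hl⟩
        exact ⟨s, t, ⟨hs, ht, hl⟩, rfl, rfl⟩

noncomputable def motzkinGF (P : List ℤ → Prop) : PowerSeries ℚ :=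
  PowerSeries.mk fun n => (Nat.card {w : List ℤ // IsMotzkin w ∧ P w ∧ w.length = n} : ℚ)

lemma coeff_motzkinGF (P : List ℤ → Prop) [DecidablePred P] (n : ℕ) :
    coeff n (motzkinGF P) = ((motzkinWalks n).filter P).card := by
  rw [motzkinGF, coeff_mk, ← Nat.card_eq_finsetCard]
  exact congrArg Nat.cast <| Nat.card_congr <| Equiv.subtypeEquivRight fun w => by
    rw [Finset.mem_filter, mem_motzkinWalks]
    tauto

lemma motzkinGF_congr {P Q : List ℤ → Prop} (h : ∀ w, IsMotzkin w → (P w ↔ Q w)) :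
    motzkinGF P = motzkinGF Q := by
  ext n
  simp only [motzkinGF, coeff_mk]
  congr 1
  exact Nat.card_congr <| Equiv.subtypeEquivRight fun w =>
    ⟨fun ⟨hw, hP, hl⟩ => ⟨hw, (h w hw).mp hP, hl⟩, fun ⟨hw, hQ, hl⟩ => ⟨hw, (h w hw).mpr hQ, hl⟩⟩

lemma motzkinGF_comp_map_neg (P : List ℤ → Prop) :
    motzkinGF (fun w => P (w.map Neg.neg)) = motzkinGF P := by
  ext n
  simp only [motzkinGF, coeff_mk]
  congr 1
  refine Nat.card_congr <| Equiv.subtypeEquiv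
    (Function.Involutive.toPerm _ (neg_involutive.list_map)) fun w => ?_
  simp [isMotzkin_map_neg]

lemma motzkinGF_eq_nil : motzkinGF (· = []) = 1 := by
  classical
  ext n
  rw [coeff_motzkinGF, coeff_one]
  cases n with
  | zero => simp [motzkinWalks, Finset.filter_singleton]
  | succ n =>
    rw [if_neg n.succ_ne_zero, Nat.cast_eq_zero, Finset.card_eq_zero, Finset.filter_eq_empty_iff]
    rintro w hw rfl
    simp [mem_motzkinWalks] at hw

lemma motzkinGF_eq_first_step (P : List ℤ → Prop) [Decidable (P [])] :
    motzkinGF P = (if P [] then 1 else 0) + X *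
      (motzkinGF (fun t => P (-1 :: t)) + motzkinGF (fun t => P (0 :: t)) +
        motzkinGF (fun t => P (1 :: t))) := by
  classical
  ext n
  cases n with
  | zero =>
    rw [map_add, coeff_zero_X_mul, add_zero, coeff_motzkinGF]
    split_ifs with h <;> simp [motzkinWalks, Finset.filter_singleton, h]
  | succ n =>
    have hconst : coeff (n + 1) (if P [] then (1 : PowerSeries ℚ) else 0) = 0 := by
      split_ifs <;> simp
    have hcons : Function.Injective fun st : ℤ × List ℤ => st.1 :: st.2 :=
      fun _ _ h => Prod.ext (List.cons.inj h).1 (List.cons.inj h).2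
    rw [map_add, hconst, zero_add, coeff_succ_X_mul, map_add, map_add, coeff_motzkinGF,
      coeff_motzkinGF, coeff_motzkinGF, coeff_motzkinGF, motzkinWalks, Finset.filter_image,
      Finset.card_image_of_injective _ hcons, Finset.card_filter, Finset.sum_product,
      Finset.sum_insert (by decide), Finset.sum_insert (by decide), Finset.sum_singleton]
    simp only [Finset.card_filter]
    push_cast
    ring

lemma motzkinGF_eq_mul {P Q R : List ℤ → Prop}
    (hP : ∀ p p', P p → P p' → p <+: p' → p = p')
    (hR : ∀ w, IsMotzkin w → (R w ↔ ∃ p q, P p ∧ Q q ∧ w = p ++ q)) :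
    motzkinGF R = motzkinGF P * motzkinGF Q := by
  classical
  have hcancel : ∀ p q p' q', P p → P p' → p ++ q = p' ++ q' → p = p' := by
    intro p q p' q' hp hp' h
    rcases le_total p.length p'.length with hl | hl
    · exact hP p p' hp hp' (List.prefix_of_prefix_length_le (List.prefix_append p q)
        (h ▸ List.prefix_append p' q') hl)
    · exact (hP p' p hp' hp (List.prefix_of_prefix_length_le (h ▸ List.prefix_append p' q')
        (List.prefix_append p q) hl)).symm
  ext n
  rw [coeff_mul, coeff_motzkinGF]
  simp only [coeff_motzkinGF]
  norm_cast
  simp_rw [← Finset.card_product]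
  rw [← Finset.card_sigma]
  symm
  refine Finset.card_bij (fun x _ => x.2.1 ++ x.2.2) ?_ ?_ ?_
  · rintro ⟨⟨i, j⟩, p, q⟩ hx
    simp only [Finset.mem_sigma, Finset.HasAntidiagonal.mem_antidiagonal, Finset.mem_product,
      Finset.mem_filter, mem_motzkinWalks] at hx ⊢
    obtain ⟨hij, ⟨⟨hpm, hpl⟩, hp⟩, ⟨hqm, hql⟩, hq⟩ := hx
    have hw : IsMotzkin (p ++ q) := isMotzkin_append.mpr ⟨hpm, hqm⟩
    exact ⟨⟨hw, by simp [hpl, hql, ← hij]⟩, (hR _ hw).mpr ⟨p, q, hp, hq, rfl⟩⟩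
  · rintro ⟨⟨i, j⟩, p, q⟩ hx ⟨⟨i', j'⟩, p', q'⟩ hx' h
    simp only [Finset.mem_sigma, Finset.HasAntidiagonal.mem_antidiagonal, Finset.mem_product,
      Finset.mem_filter, mem_motzkinWalks] at hx hx' h
    obtain ⟨hij, ⟨⟨-, hpl⟩, hp⟩, -⟩ := hx
    obtain ⟨hij', ⟨⟨-, hpl'⟩, hp'⟩, -⟩ := hx'
    obtain rfl := hcancel p q p' q' hp hp' h
    obtain rfl := List.append_cancel_left h
    obtain rfl : i = i' := hpl.symm.trans hpl'
    obtain rfl : j = j' := by omega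
    rfl
  · intro w hw
    simp only [Finset.mem_filter, mem_motzkinWalks] at hw
    obtain ⟨⟨hwm, hwl⟩, hRw⟩ := hw
    obtain ⟨p, q, hp, hq, rfl⟩ := (hR w hwm).mp hRw
    obtain ⟨hpm, hqm⟩ := isMotzkin_append.mp hwm
    refine ⟨⟨(p.length, q.length), p, q⟩, ?_, rfl⟩
    simp only [Finset.mem_sigma, Finset.HasAntidiagonal.mem_antidiagonal, Finset.mem_product,
      Finset.mem_filter, mem_motzkinWalks]
    exact ⟨by simpa using hwl, ⟨⟨hpm, trivial⟩, hp⟩, ⟨hqm, trivial⟩, hq⟩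

lemma U_eq_motzkinGF : U = motzkinGF IsPrimitive := by
  ext n
  simp only [U, motzkinGF, coeff_mk]
  exact congrArg Nat.cast <| Nat.card_congr <| Equiv.subtypeEquivRight fun w =>
    ⟨fun ⟨hw, hp, hl, _⟩ => ⟨hw, hp, hl⟩, fun ⟨hw, hp, hl⟩ => ⟨hw, hp, hl, hp.ne_nil⟩⟩

lemma B_eq_motzkinGF : B = motzkinGF fun w => increment w = 0 ∧ w ≠ [] := by
  ext n
  simp only [B, motzkinGF, coeff_mk]
  exact congrArg Nat.cast <| Nat.card_congr <| Equiv.subtypeEquivRight fun w => by tauto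

lemma U_eq_X_mul : U = X * (1 + U + U ^ 2) := by
  classical
  have hprim_one : motzkinGF (fun t => IsPrimitive (1 :: t)) = U * U := by
    rw [U_eq_motzkinGF]
    exact motzkinGF_eq_mul (fun p p' hp hp' => hp.eq_of_prefix hp')
      fun t ht => isPrimitive_one_cons ht
  have hprim_neg_one : motzkinGF (fun t => IsPrimitive (-1 :: t)) = 1 := by
    simp only [isPrimitive_neg_one_cons, motzkinGF_eq_nil]
  conv_lhs => rw [U_eq_motzkinGF, motzkinGF_eq_first_step]
  simp only [isPrimitive_zero_cons, hprim_one, hprim_neg_one, ← U_eq_motzkinGF]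
  rw [if_neg fun h => IsPrimitive.ne_nil h rfl]
  ring

lemma M_eq_motzkinGF (i : ℤ) : M i = motzkinGF fun w => increment w = i := rfl

lemma M_neg_one_eq : M (-1) = U * M 0 := by
  rw [U_eq_motzkinGF, M_eq_motzkinGF, M_eq_motzkinGF]
  exact motzkinGF_eq_mul (fun p p' hp hp' => hp.eq_of_prefix hp')
    fun w hw => increment_eq_neg_one_iff hw

lemma M_one_eq : M 1 = M (-1) := by
  rw [M_eq_motzkinGF, ← motzkinGF_comp_map_neg]
  exact motzkinGF_congr fun w _ => by rw [increment_map_neg]; omega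

lemma motzkinGF_increment_cons_eq_zero (s : ℤ) :
    motzkinGF (fun t => increment (s :: t) = 0) = M (-s) :=
  motzkinGF_congr fun t _ => by rw [increment_cons]; omega

lemma B_eq_first_step : B = X * (M 1 + M 0 + M (-1)) := by
  classical
  rw [B_eq_motzkinGF, motzkinGF_eq_first_step]
  simp only [ne_eq, reduceCtorEq, not_false_eq_true, and_true, not_true_eq_false, and_false,
    if_false, motzkinGF_increment_cons_eq_zero, neg_neg, neg_zero, zero_add]

lemma M_zero_eq_first_step : M 0 = 1 + X * (M 1 + M 0 + M (-1)) := by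
  classical
  conv_lhs => rw [M_eq_motzkinGF, motzkinGF_eq_first_step]
  simp only [increment_nil, if_true, motzkinGF_increment_cons_eq_zero, neg_neg, neg_zero]

lemma M_zero_eq : M 0 = 1 + B := by
  rw [B_eq_first_step, ← M_zero_eq_first_step]

lemma B_eq_X_mul : B = X * (1 + 2 * U) * (1 + B) := by
  calc B = X * (M 1 + M 0 + M (-1)) := B_eq_first_step
    _ = X * (1 + 2 * U) * (1 + B) := by rw [M_one_eq, M_neg_one_eq, M_zero_eq]; ring

section Algebra

variable {R : Type*} [CommRing R] {t u b : R}

lemma mul_one_sub_sq_eq (hu : u = t * (1 + u + u ^ 2)) (hb : b = t * (1 + 2 * u) * (1 + b)) :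
    b * (1 - u ^ 2) = u * (1 + 2 * u) := by
  linear_combination (1 + u + u ^ 2) * hb - (1 + 2 * u) * (1 + b) * hu

lemma one_sub_sq_sq_eq (hu : u = t * (1 + u + u ^ 2)) :
    (1 - u ^ 2) ^ 2 = (1 - 2 * t - 3 * t ^ 2) * (1 + u + u ^ 2) ^ 2 := by
  linear_combination (-(2 * (1 + u + u ^ 2)) - 3 * (u + t * (1 + u + u ^ 2))) * hu

end Algebra

lemma isUnit_one_add_U_add_U_sq : IsUnit (1 + U + U ^ 2) := by
  have hU : constantCoeff U = 0 := by
    rw [U_eq_X_mul, map_mul, constantCoeff_X, zero_mul]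
  simp [isUnit_iff_constantCoeff, hU]

/-- The generating series `B(t)` of nonempty Motzkin bridges satisfies
`B = t (1 + 2U)(1 + B)`; consequently `B = U(1 + 2U)/(1 - U^2)`,
`1 + B = (1 + U + U^2)/(1 - U^2)`, and `1 + B = 1/sqrt(1 - 2t - 3t^2)` (the last
identity stated as `(1+B)^2 (1 - 2t - 3t^2) = 1`). -/
theorem stmt_9 :
    B = X * (1 + 2 * U) * (1 + B) ∧
    B * (1 - U ^ 2) = U * (1 + 2 * U) ∧
    (1 + B) * (1 - U ^ 2) = 1 + U + U ^ 2 ∧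
    (1 + B) ^ 2 * (1 - 2 * X - 3 * X ^ 2) = 1 := by
  have hB : B * (1 - U ^ 2) = U * (1 + 2 * U) := mul_one_sub_sq_eq U_eq_X_mul B_eq_X_mul
  have hB1 : (1 + B) * (1 - U ^ 2) = 1 + U + U ^ 2 := by linear_combination hB
  refine ⟨B_eq_X_mul, hB, hB1, ?_⟩
  refine (isUnit_one_add_U_add_U_sq.pow 2).mul_left_cancel ?_
  linear_combination ((1 + B) * (1 - U ^ 2) + (1 + U + U ^ 2)) * hB1 -
    (1 + B) ^ 2 * one_sub_sq_sq_eq U_eq_X_mul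
end

section
/- If U is a formal power series with U(0)=0 satisfying U = t(1 + U + U^2), then t = U/(1 + U + U^2); more generally, a rational function in U is a rational function of t if and only if it is symmetric under the exchange U <-> 1/U. -/
/-!
Let `σ` be the automorphism `F(X) ↦ F(1/X)` of `K(X)` and `t = X / (1 + X + X²)`.
Since `1/t = X + 1 + X⁻¹`, the field `K(t)` is fixed by `σ`; since the numerator and
denominator of `t` have degree at most `2`, `[K(X) : K(t)] ≤ 2`. The fixed field of `σ ≠ id`
is a proper subfield of `K(X)` containing `K(t)`, so the tower law forces it to be `K(t)`.
Finally, with `N` the larger of the degrees of numerator and denominator, `σ F = F` is a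
polynomial identity between `num · Xᴺ denom(1/X)` and `Xᴺ num(1/X) · denom`, which over an
infinite field can be tested pointwise away from the finitely many poles of `F(x)` and `F(1/x)`.
-/

open PowerSeries

namespace Polynomial

theorem aeval_inv_eq_aeval_reflect_mul {R L : Type*} [CommSemiring R] [Field L] [Algebra R L]
    {x : L} (hx : x ≠ 0) {p : R[X]} {N : ℕ} (hp : p.natDegree ≤ N) :
    aeval x⁻¹ p = aeval x (p.reflect N) * x⁻¹ ^ N := by
  let : Invertible x⁻¹ := invertibleOfNonzero (inv_ne_zero hx)
  simpa [aeval_def, invOf_eq_inv] using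
    (eval₂_reflect_mul_pow (algebraMap R L) x⁻¹ N p hp).symm

theorem eval_reflect {K : Type*} [Field K] {x : K} (hx : x ≠ 0) {p : K[X]} {N : ℕ}
    (hp : p.natDegree ≤ N) : (p.reflect N).eval x = x ^ N * p.eval x⁻¹ := by
  have h := aeval_inv_eq_aeval_reflect_mul hx hp
  rw [coe_aeval_eq_eval, coe_aeval_eq_eval] at h
  rw [h, mul_comm, mul_assoc, ← mul_pow, inv_mul_cancel₀ hx, one_pow, mul_one]

variable {R : Type*} [CommRing R] [IsDomain R]

theorem eq_of_eventually_eval_eq [Infinite R] {p q : R[X]}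
    (h : ∀ᶠ x in Filter.cofinite, p.eval x = q.eval x) : p = q :=
  eq_of_infinite_eval_eq p q (Filter.frequently_cofinite_iff_infinite.1 h.frequently)

theorem eventually_cofinite_eval_ne_zero {p : R[X]} (hp : p ≠ 0) :
    ∀ᶠ x in Filter.cofinite, p.eval x ≠ 0 :=
  Filter.eventually_cofinite.2 (by simpa using finite_setOfPred_isRoot hp)

end Polynomial

namespace IntermediateField

theorem adjoin_rat_toSubfield {L : Type*} [Field L] [Algebra ℚ L] (S : Set L) :
    (adjoin ℚ S).toSubfield = Subfield.closure S := by
  rw [adjoin_toSubfield]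
  refine le_antisymm (Subfield.closure_le.2 (Set.union_subset ?_ Subfield.subset_closure))
    (Subfield.closure_mono Set.subset_union_right)
  rintro _ ⟨q, rfl⟩
  rw [eq_ratCast]
  exact SubfieldClass.ratCast_mem _ q

variable {K L : Type*} [Field K] [Field L] [Algebra K L]

def fixedBy (σ : L →ₐ[K] L) : IntermediateField K L where
  toSubalgebra := AlgHom.equalizer σ (AlgHom.id K L)
  inv_mem' x (hx : σ x = x) := show σ x⁻¹ = x⁻¹ by rw [map_inv₀, hx]

@[simp]
theorem mem_fixedBy {σ : L →ₐ[K] L} {x : L} : x ∈ fixedBy σ ↔ σ x = x := Iff.rfl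

open Module in
theorem fixedBy_eq_bot_of_finrank_le_two [FiniteDimensional K L] (hL : finrank K L ≤ 2)
    {σ : L →ₐ[K] L} (hσ : σ ≠ AlgHom.id K L) : fixedBy σ = ⊥ := by
  have hne_top : fixedBy σ ≠ ⊤ := fun h ↦
    hσ <| AlgHom.ext fun x ↦ mem_fixedBy.1 (h ▸ mem_top)
  have hne_one : finrank (fixedBy σ) L ≠ 1 := (finrank_eq_one_iff_eq_top.not).2 hne_top
  have hpos : 0 < finrank (fixedBy σ) L := finrank_pos
  have hpos' : 0 < finrank K (fixedBy σ) := finrank_pos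
  have htower := finrank_mul_finrank K (fixedBy σ) L
  rw [← finrank_eq_one_iff]
  nlinarith [show 2 ≤ finrank (fixedBy σ) L by omega]

end IntermediateField

namespace RatFunc

open scoped Polynomial

variable {K : Type*} [Field K]

theorem aeval_X_inv_injective :
    Function.Injective (Polynomial.aeval (R := K) (X⁻¹ : RatFunc K)) := by
  refine (injective_iff_map_eq_zero _).2 fun p hp ↦ ?_
  rw [Polynomial.aeval_inv_eq_aeval_reflect_mul X_ne_zero le_rfl, aeval_X_left_eq_algebraMap,
    mul_eq_zero, (algebraMap_injective K).eq_iff' (map_zero _)] at hp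
  simpa using hp.resolve_right (pow_ne_zero _ (inv_ne_zero X_ne_zero))

variable (K) in
noncomputable def compInvX : RatFunc K →ₐ[K] RatFunc K :=
  liftAlgHom (Polynomial.aeval X⁻¹)
    (nonZeroDivisors_le_comap_nonZeroDivisors_of_injective _ aeval_X_inv_injective)

theorem compInvX_apply (F : RatFunc K) :
    compInvX K F = Polynomial.aeval X⁻¹ F.num / Polynomial.aeval X⁻¹ F.denom :=
  liftAlgHom_apply ..

@[simp]
theorem compInvX_X : compInvX K X = X⁻¹ := by
  simp [compInvX_apply]

theorem compInvX_eq_div_reflect (F : RatFunc K) {N : ℕ} (hnum : F.num.natDegree ≤ N)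
    (hden : F.denom.natDegree ≤ N) :
    compInvX K F = algebraMap _ _ (F.num.reflect N) / algebraMap _ _ (F.denom.reflect N) := by
  rw [compInvX_apply, Polynomial.aeval_inv_eq_aeval_reflect_mul X_ne_zero hnum,
    Polynomial.aeval_inv_eq_aeval_reflect_mul X_ne_zero hden, aeval_X_left_eq_algebraMap,
    aeval_X_left_eq_algebraMap, mul_div_mul_right _ _ (pow_ne_zero _ (inv_ne_zero X_ne_zero))]

theorem compInvX_eq_self_iff (F : RatFunc K) {N : ℕ} (hnum : F.num.natDegree ≤ N)
    (hden : F.denom.natDegree ≤ N) :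
    compInvX K F = F ↔ F.num * F.denom.reflect N = F.num.reflect N * F.denom := by
  rw [compInvX_eq_div_reflect F hnum hden, eq_comm, num_mul_eq_mul_denom_iff]
  simpa using F.denom_ne_zero

theorem eval_eq_eval_inv_iff (F : RatFunc K) {N : ℕ} (hnum : F.num.natDegree ≤ N)
    (hden : F.denom.natDegree ≤ N) {x : K} (hx : x ≠ 0) (hd : F.denom.eval x ≠ 0)
    (hd' : F.denom.eval x⁻¹ ≠ 0) :
    F.eval (RingHom.id K) x = F.eval (RingHom.id K) x⁻¹ ↔
      (F.num * F.denom.reflect N).eval x = (F.num.reflect N * F.denom).eval x := by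
  simp only [RatFunc.eval, Polynomial.eval₂_id, Polynomial.eval_mul,
    Polynomial.eval_reflect hx hnum, Polynomial.eval_reflect hx hden, div_eq_div_iff hd hd']
  constructor
  · intro h
    linear_combination x ^ N * h
  · intro h
    apply mul_left_cancel₀ (pow_ne_zero N hx)
    linear_combination h

theorem compInvX_eq_self_iff_eval [Infinite K] (F : RatFunc K) :
    compInvX K F = F ↔
      ∀ x : K, x ≠ 0 → F.denom.eval x ≠ 0 → F.denom.eval x⁻¹ ≠ 0 →
        F.eval (RingHom.id K) x = F.eval (RingHom.id K) x⁻¹ := by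
  have hnum : F.num.natDegree ≤ max F.num.natDegree F.denom.natDegree := le_max_left ..
  have hden : F.denom.natDegree ≤ max F.num.natDegree F.denom.natDegree := le_max_right ..
  rw [compInvX_eq_self_iff F hnum hden]
  refine ⟨fun h x hx hd hd' ↦ (eval_eq_eval_inv_iff F hnum hden hx hd hd').2 (congrArg _ h),
    fun h ↦ Polynomial.eq_of_eventually_eval_eq ?_⟩
  have hd := Polynomial.eventually_cofinite_eval_ne_zero F.denom_ne_zero
  filter_upwards [Filter.eventually_cofinite_ne 0, hd,
    inv_injective.tendsto_cofinite.eventually hd] with x hx hdx hdx'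
  exact (eval_eq_eval_inv_iff F hnum hden hx hdx hdx').1 (h x hx hdx hdx')

theorem X_inv_ne_X : (X⁻¹ : RatFunc K) ≠ X := by
  intro h
  have hX : algebraMap K[X] (RatFunc K) (Polynomial.X * Polynomial.X) = algebraMap _ _ 1 := by
    rw [map_mul, algebraMap_X, map_one]
    nth_rw 1 [← h]
    exact inv_mul_cancel₀ X_ne_zero
  simpa using congrArg (Polynomial.eval 0) (algebraMap_injective K hX)

theorem X_div_eq_inv : (X / (1 + X + X ^ 2) : RatFunc K) = (X⁻¹ + 1 + X)⁻¹ := by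
  have hX : (X : RatFunc K) ≠ 0 := X_ne_zero
  rw [show (X⁻¹ + 1 + X : RatFunc K) = X⁻¹ * (1 + X + X ^ 2) by field_simp,
    mul_inv, inv_inv, div_eq_mul_inv]

theorem compInvX_X_div : compInvX K (X / (1 + X + X ^ 2)) = X / (1 + X + X ^ 2) := by
  rw [X_div_eq_inv, map_inv₀, map_add, map_add, map_one, map_inv₀, compInvX_X, inv_inv]
  ring

theorem one_add_X_add_X_sq_ne_zero : (1 + Polynomial.X + Polynomial.X ^ 2 : K[X]) ≠ 0 := by
  intro h
  simpa using congrArg (Polynomial.eval 0) h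

theorem X_div_eq_algebraMap_div :
    (X / (1 + X + X ^ 2) : RatFunc K) = algebraMap K[X] (RatFunc K) Polynomial.X /
      algebraMap K[X] (RatFunc K) (1 + Polynomial.X + Polynomial.X ^ 2) := by
  simp [algebraMap_X]

theorem X_div_ne_C : ¬∃ c, (X / (1 + X + X ^ 2) : RatFunc K) = C c := by
  rintro ⟨c, hc⟩
  rw [X_div_eq_algebraMap_div, div_eq_iff (algebraMap_ne_zero one_add_X_add_X_sq_ne_zero),
    ← algebraMap_C, ← map_mul] at hc
  have hpoly := algebraMap_injective K hc
  have h0 : 0 = c := by simpa using congrArg (Polynomial.coeff · 0) hpoly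
  simpa [Polynomial.coeff_one, ← h0] using congrArg (Polynomial.coeff · 1) hpoly

open Module _root_.IntermediateField

theorem finrank_adjoin_X_div_le_two :
    finrank (adjoin K {(X / (1 + X + X ^ 2) : RatFunc K)}) (RatFunc K) ≤ 2 := by
  rw [finrank_eq_max_natDegree, max_le_iff, X_div_eq_algebraMap_div]
  constructor
  · refine (Polynomial.natDegree_le_of_dvd (num_div_dvd _ one_add_X_add_X_sq_ne_zero)
      Polynomial.X_ne_zero).trans ?_
    simp
  · refine (Polynomial.natDegree_le_of_dvd (denom_div_dvd _ _)
      one_add_X_add_X_sq_ne_zero).trans ?_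
    compute_degree

theorem finrank_adjoin_X_div_pos :
    0 < finrank (adjoin K {(X / (1 + X + X ^ 2) : RatFunc K)}) (RatFunc K) := by
  rw [finrank_eq_max_natDegree, Nat.pos_iff_ne_zero, ne_eq, Nat.max_eq_zero_iff, ← eq_C_iff]
  exact X_div_ne_C

theorem mem_adjoin_X_div_iff {F : RatFunc K} :
    F ∈ adjoin K {(X / (1 + X + X ^ 2) : RatFunc K)} ↔ compInvX K F = F := by
  set k := adjoin K {(X / (1 + X + X ^ 2) : RatFunc K)}
  have hk : k ≤ fixedBy (compInvX K) := adjoin_simple_le_iff.2 compInvX_X_div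
  refine ⟨fun hF ↦ hk hF, fun hF ↦ ?_⟩
  let σ : RatFunc K →ₐ[k] RatFunc K :=
    { (compInvX K).toRingHom with commutes' := fun c ↦ hk c.2 }
  have : FiniteDimensional k (RatFunc K) := Module.finite_of_finrank_pos finrank_adjoin_X_div_pos
  have hσ : σ ≠ AlgHom.id k _ := fun h ↦
    X_inv_ne_X (by simpa [σ] using DFunLike.congr_fun h X)
  have hF' : F ∈ fixedBy σ := hF
  rw [fixedBy_eq_bot_of_finrank_le_two (finrank_adjoin_X_div_le_two (K := K)) hσ,
    mem_bot] at hF'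
  obtain ⟨c, rfl⟩ := hF'
  exact c.2

end RatFunc

/-- If `U` is a formal power series with `U(0) = 0` satisfying
`U = t(1 + U + U²)`, then `t = U/(1 + U + U²)`. More generally, a rational
function `F` in the indeterminate `U` is a rational function of `t = U/(1+U+U²)`
(i.e. lies in the subfield generated by `t`) if and only if it is symmetric under
the exchange `U ↔ 1/U` (expressed by evaluation at all nonzero rationals at which
the denominator of `F` does not vanish). -/
theorem stmt_11 :
    (∀ U : PowerSeries ℚ, constantCoeff U = 0 → U = X * (1 + U + U ^ 2) →
      X = U * (1 + U + U ^ 2)⁻¹) ∧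
    (∀ F : RatFunc ℚ,
      F ∈ Subfield.closure ({RatFunc.X / (1 + RatFunc.X + RatFunc.X ^ 2)} :
          Set (RatFunc ℚ)) ↔
        ∀ x : ℚ, x ≠ 0 → F.denom.eval x ≠ 0 → F.denom.eval x⁻¹ ≠ 0 →
          RatFunc.eval (RingHom.id ℚ) x F = RatFunc.eval (RingHom.id ℚ) x⁻¹ F) := by
  refine ⟨fun U hU₀ hU ↦ ?_, fun F ↦ ?_⟩
  · rw [PowerSeries.eq_mul_inv_iff_mul_eq (by simp [hU₀])]
    exact hU.symm
  · rw [← IntermediateField.adjoin_rat_toSubfield, IntermediateField.mem_toSubfield,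
      ← RatFunc.compInvX_eq_self_iff_eval, ← RatFunc.mem_adjoin_X_div_iff]
    -- `RatFunc ℚ` is a `ℚ`-algebra both as a field of characteristic zero and via `ℚ[X]`.
    congr! <;> exact Subsingleton.elim _ _
end

section
/- The power series U defined by U = t(1 + U + U^2), U(0)=0, has the Puiseux expansion U = 1 - sqrt(3) * sqrt(1 - 3t) + O(1 - 3t) at its dominant singularity t = 1/3, and |U(t)| <= 1 for all complex t with |t| <= 1/3, with equality only at t = 1/3. -/
/-!
The coefficients of `U` are nonnegative, and at every `0 ≤ x ≤ 1/3` the partial sums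
`S_N = ∑_{n<N} [tⁿ]U · xⁿ` stay below `1`, because the equation gives
`S_{N+1} ≤ x (1 + S_N + S_N²)`. So the series converges absolutely on the closed disc of radius
`1/3` with `U(1/3) ≤ 1`, which bounds `|U(t)|`; the bound is strict off `t = 1/3` because the first
two terms `t + t²` have norm below `1/3 + 1/9` there.

On `(0, 1/3)` the sum `S` is a root of `S = t (1 + S + S²)` with `S ≤ 1`. With `w = 1 - S` and
`ε = 1 - 3t` this reads `t w² = ε (1 - w)`, which forces `w = √(3ε) + O(ε)`.
-/

open PowerSeries Filter Asymptotics Finset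

theorem sum_antidiagonal_mul_pow_mul_mul_pow {R : Type*} [CommSemiring R] (f g : ℕ → R) (x : R)
    (n : ℕ) : ∑ p ∈ antidiagonal n, f p.1 * x ^ p.1 * (g p.2 * x ^ p.2) =
      (∑ p ∈ antidiagonal n, f p.1 * g p.2) * x ^ n := by
  rw [sum_mul]
  refine sum_congr rfl fun p hp => ?_
  rw [← mem_antidiagonal.mp hp, pow_add]
  ring

theorem sum_range_sum_antidiagonal_le_sq {x : ℕ → ℝ} (hx : ∀ i, 0 ≤ x i) (N : ℕ) :
    ∑ n ∈ range N, ∑ p ∈ antidiagonal n, x p.1 * x p.2 ≤ (∑ i ∈ range N, x i) ^ 2 := by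
  simp_rw [Nat.sum_antidiagonal_eq_sum_range_succ (fun i j => x i * x j),
    sum_range_diag_flip N (fun i j => x i * x j), sq, sum_mul_sum]
  gcongr with i _
  · exact fun j _ _ => mul_nonneg (hx i) (hx j)
  · omega

theorem norm_tsum_lt_of_norm_sum_lt {ι E : Type*} [NormedAddCommGroup E] [CompleteSpace E]
    {f : ι → E} {b : ι → ℝ} (hb : Summable b) (hfb : ∀ i, ‖f i‖ ≤ b i) (s : Finset ι)
    (hs : ‖∑ i ∈ s, f i‖ < ∑ i ∈ s, b i) : ‖∑' i, f i‖ < ∑' i, b i := by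
  rw [← (hb.of_norm_bounded hfb).sum_add_tsum_compl (s := s), ← hb.sum_add_tsum_compl (s := s)]
  have htail : ‖∑' i : ↥(s : Set ι)ᶜ, f i‖ ≤ ∑' i : ↥(s : Set ι)ᶜ, b i :=
    tsum_of_norm_bounded (hb.subtype _).hasSum fun i => hfb i
  exact (norm_add_le _ _).trans_lt (add_lt_add_of_lt_of_le hs htail)

theorem Complex.norm_add_sq_lt {t : ℂ} {r : ℝ} (ht : ‖t‖ ≤ r) (hne : t ≠ r) :
    ‖t + t ^ 2‖ < r + r ^ 2 := by
  rw [show t + t ^ 2 = t * (1 + t) by ring, norm_mul, show r + r ^ 2 = r * (1 + r) by ring]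
  have h1 : ‖1 + t‖ ≤ 1 + ‖t‖ := (norm_add_le 1 t).trans_eq (by rw [norm_one])
  rcases ht.lt_or_eq with hlt | rfl
  · nlinarith [norm_nonneg t, norm_nonneg (1 + t)]
  · have hpos : 0 < ‖t‖ := norm_pos_iff.mpr fun h => hne (by simp [h])
    have hlt : ‖1 + t‖ < 1 + ‖t‖ := by
      refine h1.lt_of_ne fun h => hne ?_
      obtain h | h | h := (norm_add_eq_iff (x := 1) (y := t)).mp (by rwa [norm_one])
      · exact absurd h one_ne_zero
      · simp [h] at hpos
      · rw [arg_one, eq_comm, arg_eq_zero_iff_zero_le] at h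
        rw [← re_eq_norm.mpr h]
        exact eq_re_of_ofReal_le (r := 0) (by rwa [ofReal_zero])
    gcongr

theorem abs_sub_one_sub_le_of_eq_mul_one_add_add_sq {t S q : ℝ} (ht0 : 0 < t) (ht : t < 1 / 3)
    (hS1 : S ≤ 1) (hS : S = t * (1 + S + S ^ 2)) (hq0 : 0 ≤ q) (hq : q ^ 2 = 3 * (1 - 3 * t)) :
    |S - (1 - q)| ≤ (1 - 3 * t) / t := by
  set ε := 1 - 3 * t with hε
  set w := 1 - S with hw
  have hε0 : 0 < ε := by linarith
  have hεq : ε ≤ q := by nlinarith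
  have hwq : 0 < w + q := by linarith
  have key : (w - q) * (w + q) * t = ε * (ε - w) := by
    rw [hε, hw]
    linear_combination (-1) * hS - t * hq
  have habs : |w - q| * (w + q) * t = ε * |ε - w| := by
    simpa [abs_mul, abs_of_pos hwq, abs_of_pos ht0, abs_of_pos hε0] using congrArg abs key
  rw [le_div_iff₀ ht0, show S - (1 - q) = -(w - q) by ring, abs_neg]
  refine le_of_mul_le_mul_right ?_ hwq
  calc |w - q| * t * (w + q) = ε * |ε - w| := by rw [← habs]; ring
    _ ≤ ε * (w + q) := by gcongr; rw [abs_le]; constructor <;> linarith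

section Evaluation

variable {R : Type*} [NormedCommRing R] {P Q : R⟦X⟧} {t a b : R}

theorem hasSum_coeff_one_mul_pow (t : R) : HasSum (fun n => coeff n (1 : R⟦X⟧) * t ^ n) 1 := by
  convert hasSum_ite_eq 0 (1 : R) with n
  split_ifs with h <;> simp [coeff_one, h]

theorem HasSum.coeff_add_mul_pow (hP : HasSum (fun n => coeff n P * t ^ n) a)
    (hQ : HasSum (fun n => coeff n Q * t ^ n) b) :
    HasSum (fun n => coeff n (P + Q) * t ^ n) (a + b) := by
  simpa only [map_add, add_mul] using hP.add hQ

theorem HasSum.coeff_X_mul_mul_pow (hP : HasSum (fun n => coeff n P * t ^ n) a) :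
    HasSum (fun n => coeff n (X * P) * t ^ n) (t * a) := by
  rw [← hasSum_nat_add_iff' 1, sum_range_one, coeff_zero_X_mul, zero_mul, sub_zero]
  refine (hP.mul_left t).congr_fun fun n => ?_
  rw [coeff_succ_X_mul, pow_succ]
  ring

theorem hasSum_coeff_mul_mul_pow [CompleteSpace R] (hP : Summable fun n => ‖coeff n P * t ^ n‖)
    (hQ : Summable fun n => ‖coeff n Q * t ^ n‖) :
    HasSum (fun n => coeff n (P * Q) * t ^ n)
      ((∑' n, coeff n P * t ^ n) * ∑' n, coeff n Q * t ^ n) := by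
  simp_rw [coeff_mul, ← sum_antidiagonal_mul_pow_mul_mul_pow (coeff · P) (coeff · Q),
    tsum_mul_tsum_eq_tsum_sum_antidiagonal_of_summable_norm hP hQ]
  exact (summable_norm_sum_mul_antidiagonal_of_summable_norm hP hQ).of_norm.hasSum

end Evaluation

namespace Motzkin

variable {U : ℝ⟦X⟧}

theorem coeff_succ (hU : U = X * (1 + U + U ^ 2)) (n : ℕ) :
    coeff (n + 1) U = (if n = 0 then 1 else 0) + coeff n U
      + ∑ p ∈ antidiagonal n, coeff p.1 U * coeff p.2 U := by
  conv_lhs => rw [hU]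
  rw [coeff_succ_X_mul, map_add, map_add, coeff_one, sq, coeff_mul]

variable (h0 : constantCoeff U = 0)
include h0

theorem coeff_zero : coeff 0 U = 0 := by rwa [coeff_zero_eq_constantCoeff_apply]

variable (hU : U = X * (1 + U + U ^ 2))
include hU

theorem coeff_one_eq : coeff 1 U = 1 := by
  simp [coeff_succ hU 0, coeff_zero h0]

theorem coeff_two_eq : coeff 2 U = 1 := by
  simp [coeff_succ hU 1, coeff_one_eq h0 hU, coeff_zero h0, Nat.antidiagonal_succ]

theorem coeff_nonneg (n : ℕ) : 0 ≤ coeff n U := by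
  induction n using Nat.strong_induction_on with
  | _ n ih =>
    rcases n with _ | n
    · rw [coeff_zero h0]
    · rw [coeff_succ hU]
      have hn := ih n n.lt_succ_self
      have hsq : 0 ≤ ∑ p ∈ antidiagonal n, coeff p.1 U * coeff p.2 U :=
        sum_nonneg fun p hp => mul_nonneg (ih _ (by linarith [mem_antidiagonal.mp hp]))
          (ih _ (by linarith [mem_antidiagonal.mp hp]))
      positivity

theorem coeff_mul_pow_nonneg {x : ℝ} (hx0 : 0 ≤ x) (n : ℕ) : 0 ≤ coeff n U * x ^ n :=
  mul_nonneg (coeff_nonneg h0 hU n) (by positivity)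

theorem sum_range_coeff_mul_pow_le_one {x : ℝ} (hx0 : 0 ≤ x) (hx : x ≤ 1 / 3) (N : ℕ) :
    ∑ n ∈ range N, coeff n U * x ^ n ≤ 1 := by
  have hterm := coeff_mul_pow_nonneg h0 hU hx0
  induction N with
  | zero => simp
  | succ N ih =>
    set S := ∑ n ∈ range N, coeff n U * x ^ n with hS
    set D := ∑ n ∈ range N, (if n = 0 then 1 else 0) * x ^ n with hD
    set C := ∑ n ∈ range N, ∑ p ∈ antidiagonal n, coeff p.1 U * x ^ p.1 * (coeff p.2 U * x ^ p.2)
      with hC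
    have hD1 : D ≤ 1 := by
      simp only [hD, ite_mul, one_mul, zero_mul, sum_ite_eq', mem_range]
      split_ifs <;> norm_num
    have hD0 : 0 ≤ D := sum_nonneg fun n _ => by positivity
    have hS0 : 0 ≤ S := sum_nonneg fun n _ => hterm n
    have hC0 : 0 ≤ C := sum_nonneg fun n _ => sum_nonneg fun p _ => mul_nonneg (hterm _) (hterm _)
    have hC1 : C ≤ 1 := (sum_range_sum_antidiagonal_le_sq hterm N).trans (pow_le_one₀ hS0 ih)
    calc ∑ n ∈ range (N + 1), coeff n U * x ^ n = x * (D + S + C) := by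
          rw [sum_range_succ', coeff_zero h0, zero_mul, add_zero, hS, hD, hC,
            ← sum_add_distrib, ← sum_add_distrib, mul_sum]
          refine sum_congr rfl fun n _ => ?_
          rw [coeff_succ hU, sum_antidiagonal_mul_pow_mul_mul_pow (coeff · U) (coeff · U)]
          ring
      _ ≤ 1 / 3 * (1 + 1 + 1) := by gcongr
      _ = 1 := by norm_num

theorem summable_coeff_mul_pow {x : ℝ} (hx0 : 0 ≤ x) (hx : x ≤ 1 / 3) :
    Summable fun n => coeff n U * x ^ n :=
  summable_of_sum_range_le (coeff_mul_pow_nonneg h0 hU hx0)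
    (sum_range_coeff_mul_pow_le_one h0 hU hx0 hx)

theorem tsum_coeff_mul_pow_le_one {x : ℝ} (hx0 : 0 ≤ x) (hx : x ≤ 1 / 3) :
    ∑' n, coeff n U * x ^ n ≤ 1 :=
  Real.tsum_le_of_sum_range_le (coeff_mul_pow_nonneg h0 hU hx0)
    (sum_range_coeff_mul_pow_le_one h0 hU hx0 hx)

theorem tsum_coeff_mul_pow_eq {x : ℝ} (hx0 : 0 ≤ x) (hx : x ≤ 1 / 3) :
    ∑' n, coeff n U * x ^ n =
      x * (1 + ∑' n, coeff n U * x ^ n + (∑' n, coeff n U * x ^ n) ^ 2) := by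
  have hsum := summable_coeff_mul_pow h0 hU hx0 hx
  have hnorm : Summable fun n => ‖coeff n U * x ^ n‖ :=
    hsum.congr fun n => (Real.norm_of_nonneg (coeff_mul_pow_nonneg h0 hU hx0 n)).symm
  have h := (((hasSum_coeff_one_mul_pow x).coeff_add_mul_pow hsum.hasSum).coeff_add_mul_pow
    (hasSum_coeff_mul_mul_pow hnorm hnorm)).coeff_X_mul_mul_pow
  rw [← sq, ← sq, ← hU] at h
  exact h.tsum_eq

theorem isBigO_tsum_sub_puiseux :
    (fun t : ℝ => ∑' n, coeff n U * t ^ n - (1 - √3 * √(1 - 3 * t)))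
      =O[nhdsWithin (1 / 3) (Set.Iio (1 / 3))] fun t => 1 - 3 * t := by
  refine IsBigO.of_bound 4 ?_
  filter_upwards [Ioo_mem_nhdsLT (show (1 / 4 : ℝ) < 1 / 3 by norm_num)] with t ⟨ht1, ht2⟩
  have hq : (√3 * √(1 - 3 * t)) ^ 2 = 3 * (1 - 3 * t) := by
    rw [mul_pow, Real.sq_sqrt, Real.sq_sqrt] <;> linarith
  have hbound := abs_sub_one_sub_le_of_eq_mul_one_add_add_sq (by linarith) ht2
    (tsum_coeff_mul_pow_le_one h0 hU (by linarith) ht2.le)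
    (tsum_coeff_mul_pow_eq h0 hU (by linarith) ht2.le) (by positivity) hq
  rw [Real.norm_eq_abs, Real.norm_eq_abs, abs_of_pos (by linarith : 0 < 1 - 3 * t)]
  refine hbound.trans ?_
  rw [div_le_iff₀ (by linarith)]
  nlinarith

theorem norm_coeff_mul_pow_le {t : ℂ} (ht : ‖t‖ ≤ 1 / 3) (n : ℕ) :
    ‖(coeff (R := ℝ) n U : ℂ) * t ^ n‖ ≤ coeff n U * (1 / 3) ^ n := by
  rw [norm_mul, norm_pow, Complex.norm_real, Real.norm_of_nonneg (coeff_nonneg h0 hU n)]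
  gcongr
  exact coeff_nonneg h0 hU n

theorem norm_tsum_coeff_mul_pow_le_one {t : ℂ} (ht : ‖t‖ ≤ 1 / 3) :
    ‖∑' n, (coeff (R := ℝ) n U : ℂ) * t ^ n‖ ≤ 1 :=
  (tsum_of_norm_bounded (summable_coeff_mul_pow h0 hU (by norm_num) le_rfl).hasSum
    (norm_coeff_mul_pow_le h0 hU ht)).trans (tsum_coeff_mul_pow_le_one h0 hU (by norm_num) le_rfl)

theorem norm_tsum_coeff_mul_pow_lt_one {t : ℂ} (ht : ‖t‖ ≤ 1 / 3) (hne : t ≠ 1 / 3) :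
    ‖∑' n, (coeff (R := ℝ) n U : ℂ) * t ^ n‖ < 1 := by
  refine (norm_tsum_lt_of_norm_sum_lt (summable_coeff_mul_pow h0 hU (by norm_num) le_rfl)
    (norm_coeff_mul_pow_le h0 hU ht) {1, 2} ?_).trans_le
    (tsum_coeff_mul_pow_le_one h0 hU (by norm_num) le_rfl)
  simpa [coeff_one_eq h0 hU, coeff_two_eq h0 hU] using
    Complex.norm_add_sq_lt (r := 1 / 3) (by simpa using ht) (by simpa using hne)

end Motzkin

/-- Let `U` be the power series with `U = t(1 + U + U²)`, `U(0) = 0`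
(the primitive Motzkin walk series).  Writing `u` for its sum, the Puiseux
expansion `u(t) = 1 - √3 · √(1 - 3t) + O(1 - 3t)` holds at the dominant
singularity `t = 1/3` (as `t → 1/3⁻`), and `|u(t)| ≤ 1` for every complex `t`
with `|t| ≤ 1/3`, with equality only at `t = 1/3`. -/
theorem stmt_12 (U : PowerSeries ℝ) (h0 : constantCoeff U = 0)
    (hU : U = X * (1 + U + U ^ 2))
    (u : ℝ → ℝ) (hu : ∀ t : ℝ, u t = ∑' n : ℕ, coeff n U * t ^ n)
    (uC : ℂ → ℂ) (huC : ∀ t : ℂ, uC t = ∑' n : ℕ, (coeff (R := ℝ) n U : ℂ) * t ^ n) :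
    ((fun t : ℝ => u t - (1 - Real.sqrt 3 * Real.sqrt (1 - 3 * t)))
      =O[nhdsWithin (1/3) (Set.Iio (1/3))] (fun t : ℝ => 1 - 3 * t)) ∧
    (∀ t : ℂ, ‖t‖ ≤ 1/3 → ‖uC t‖ ≤ 1 ∧ (‖uC t‖ = 1 → t = 1/3)) := by
  refine ⟨?_, fun t ht => ?_⟩
  · simpa only [hu] using Motzkin.isBigO_tsum_sub_puiseux h0 hU
  · rw [huC]
    exact ⟨Motzkin.norm_tsum_coeff_mul_pow_le_one h0 hU ht, fun h1 =>
      by_contra fun hne => (Motzkin.norm_tsum_coeff_mul_pow_lt_one h0 hU ht hne).ne h1⟩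
end
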